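/- Assume P is transitive and satisfies the Strong Supplementation Principle. Then for all x, y ∈ U: Ing x y if and only if every u that overlaps x also overlaps y, and equivalently Ing x y if and only if every u exterior to y is exterior to x. -/

import Mathlib

variable {U : Type*}

/-- `x` is an ingrediens of `y`. -/
def Ing (P : U → U → Prop) (x y : U) : Prop := x = y ∨ P x y

/-- `x` and `y` overlap. -/
def Ov (P : U → U → Prop) (x y : U) : Prop := ∃ z, Ing P z x ∧ Ing P z y

/-- `x` is exterior to `y`. -/
def MExt (P : U → U → Prop) (x y : U) : Prop := ¬ Ov P x y

/-- `x` is a mereological sum of all elements of `S`. -/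
def MSum (P : U → U → Prop) (x : U) (S : Set U) : Prop :=
  (∀ s ∈ S, Ing P s x) ∧ ∀ u, Ing P u x → ∃ s ∈ S, Ov P s u

/-- `x` is a supremum (least upper bound) of `S`. -/
def MSup (P : U → U → Prop) (x : U) (S : Set U) : Prop :=
  (∀ s ∈ S, Ing P s x) ∧ ∀ u, (∀ s ∈ S, Ing P s u) → Ing P x u

/-- `x` and `y` cross (properly overlap). -/
def POv (P : U → U → Prop) (x y : U) : Prop :=
  x ≠ y ∧ ¬ P x y ∧ ¬ P y x ∧ ∃ z, P z x ∧ P z y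

theorem Ing.refl (P : U → U → Prop) (x : U) : Ing P x x := Or.inl rfl

theorem Ing.trans {P : U → U → Prop} (htrans : ∀ x y z, P x y → P y z → P x z) {x y z : U} :
    Ing P x y → Ing P y z → Ing P x z := by
  rintro (rfl | hxy) (rfl | hyz)
  · exact Ing.refl P _
  · exact Or.inr hyz
  · exact Or.inr hxy
  · exact Or.inr (htrans x y z hxy hyz)

theorem Ov.of_ing_right {P : U → U → Prop} (htrans : ∀ x y z, P x y → P y z → P x z)
    {u x y : U} (hxy : Ing P x y) : Ov P u x → Ov P u y :=
  fun ⟨z, hzu, hzx⟩ => ⟨z, hzu, Ing.trans htrans hzx hxy⟩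

theorem ing_of_forall_ov {P : U → U → Prop}
    (hSSP : ∀ x y, ¬ Ing P x y → ∃ z, Ing P z x ∧ MExt P z y) {x y : U}
    (h : ∀ u, Ov P u x → Ov P u y) : Ing P x y := by
  by_contra hxy
  obtain ⟨z, hzx, hzy⟩ := hSSP x y hxy
  exact hzy (h z ⟨z, Ing.refl P z, hzx⟩)

theorem ing_iff_forall_ov {P : U → U → Prop} (htrans : ∀ x y z, P x y → P y z → P x z)
    (hSSP : ∀ x y, ¬ Ing P x y → ∃ z, Ing P z x ∧ MExt P z y) (x y : U) :
    Ing P x y ↔ ∀ u, Ov P u x → Ov P u y :=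
  ⟨fun hxy _ => Ov.of_ing_right htrans hxy, ing_of_forall_ov hSSP⟩

theorem forall_mext_imp_iff_forall_ov_imp (P : U → U → Prop) (x y : U) :
    (∀ u, MExt P u y → MExt P u x) ↔ ∀ u, Ov P u x → Ov P u y :=
  forall_congr' fun _ => not_imp_not

theorem stmt_11 (P : U → U → Prop)
    (htrans : ∀ x y z, P x y → P y z → P x z)
    (hSSP : ∀ x y, ¬ Ing P x y → ∃ z, Ing P z x ∧ MExt P z y) :
    ∀ x y : U,
      (Ing P x y ↔ ∀ u, Ov P u x → Ov P u y) ∧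
      (Ing P x y ↔ ∀ u, MExt P u y → MExt P u x) := by
  intro x y
  have hov := ing_iff_forall_ov htrans hSSP x y
  exact ⟨hov, hov.trans (forall_mext_imp_iff_forall_ov_imp P x y).symm⟩
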